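/- Weighted Poincaré inequality: Let w(x) = (2e/(e-1)²) sinh(x) on (0,1). There exists a constant C > 0 such that for all v ∈ C_c^∞(0,1), ∫₀¹ w(x) v(x)² dx ≤ C ∫₀¹ w(x) v'(x)² dx. -/

import Mathlib

open Real Set intervalIntegral MeasureTheory

/-- The degenerate weight `w(x) = (2e/(e-1)²) sinh x`. -/
noncomputable def w (x : ℝ) : ℝ :=
  2 * Real.exp 1 / (Real.exp 1 - 1)^2 * Real.sinh x

/-- Elementary optimization: if `m ≤ A/(2L) + L B/2` for all `L > 0`, then `m² ≤ A·B`. -/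
lemma aux_amgm_opt {A B m : ℝ} (hA : 0 ≤ A) (hB : 0 ≤ B) (hm : 0 ≤ m)
    (h : ∀ L : ℝ, 0 < L → m ≤ 1 / (2 * L) * A + L / 2 * B) : m ^ 2 ≤ A * B := by
  rcases hm.eq_or_lt with rfl | hm'
  · simpa using mul_nonneg hA hB
  rcases hA.eq_or_lt with rfl | hA'
  · rcases hB.eq_or_lt with rfl | hB'
    · have := h 1 one_pos; simp at this; nlinarith
    · have h1 := h (m / B) (div_pos hm' hB')
      have h2 : m / B * B = m := div_mul_cancel₀ m hB'.ne'
      nlinarith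
  rcases hB.eq_or_lt with rfl | hB'
  · have h1 := h (A / m) (div_pos hA' hm')
    have h2 : 1 / (2 * (A / m)) * A = m / 2 := by
      field_simp
    nlinarith
  · have hsa : 0 < Real.sqrt A := Real.sqrt_pos.2 hA'
    have hsb : 0 < Real.sqrt B := Real.sqrt_pos.2 hB'
    have hA2 : Real.sqrt A * Real.sqrt A = A := Real.mul_self_sqrt hA
    have hB2 : Real.sqrt B * Real.sqrt B = B := Real.mul_self_sqrt hB
    have key := h (Real.sqrt A / Real.sqrt B) (div_pos hsa hsb)
    have e1 : 1 / (2 * (Real.sqrt A / Real.sqrt B)) * A = Real.sqrt A * Real.sqrt B / 2 := by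
      field_simp; linear_combination (-1 : ℝ) * hA2
    have e2 : Real.sqrt A / Real.sqrt B / 2 * B = Real.sqrt A * Real.sqrt B / 2 := by
      field_simp; linear_combination (-1 : ℝ) * hB2
    rw [e1, e2] at key
    nlinarith

/-- `sinh x ≤ cosh 1 · x` on `[0, 1]`. -/
lemma aux_sinh_le {x : ℝ} (h0 : 0 ≤ x) (h1 : x ≤ 1) : Real.sinh x ≤ Real.cosh 1 * x := by
  have hmono : MonotoneOn (fun y : ℝ => Real.cosh 1 * y - Real.sinh y) (Icc 0 1) := by
    apply monotoneOn_of_deriv_nonneg (convex_Icc 0 1)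
    · exact ((continuous_const.mul continuous_id).sub Real.continuous_sinh).continuousOn
    · exact (((differentiable_id.const_mul (Real.cosh 1)).sub
        Real.differentiable_sinh)).differentiableOn
    · intro y hy
      rw [interior_Icc] at hy
      have hd : HasDerivAt (fun y : ℝ => Real.cosh 1 * y - Real.sinh y)
          (Real.cosh 1 * 1 - Real.cosh y) y :=
        ((hasDerivAt_id y).const_mul _).sub (Real.hasDerivAt_sinh y)
      rw [hd.deriv]
      have : Real.cosh y ≤ Real.cosh 1 := by
        rw [Real.cosh_le_cosh]
        rw [abs_of_nonneg hy.1.le, abs_one]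
        exact hy.2.le
      linarith
  have := hmono (left_mem_Icc.2 zero_le_one) ⟨h0, h1⟩ h0
  simp only [mul_zero, Real.sinh_zero, sub_zero] at this
  linarith

set_option maxHeartbeats 1000000 in
/-- Weighted Poincaré inequality: there is `C > 0` with
`∫₀¹ w v² ≤ C ∫₀¹ w v'²` for all `v ∈ C_c^∞(0,1)`. -/
theorem stmt17 :
    ∃ C : ℝ, 0 < C ∧
      ∀ v : ℝ → ℝ, ContDiff ℝ (⊤ : ℕ∞) v → HasCompactSupport v →
        tsupport v ⊆ Set.Ioo 0 1 →
        (∫ x in (0:ℝ)..1, w x * v x^2) ≤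
          C * ∫ x in (0:ℝ)..1, w x * (deriv v x)^2 := by
  refine ⟨Real.cosh 1, Real.cosh_pos 1, ?_⟩
  intro v hv _hcs hsupp
  set D := deriv v with hDdef
  have hvd : Differentiable ℝ v := hv.differentiable (by simp)
  have hD : Continuous D := hv.continuous_deriv (by simp)
  -- the comparison integral
  set I : ℝ := ∫ t in (0:ℝ)..1, t * D t ^ 2 with hIdef
  have hIint : ∀ a b : ℝ, IntervalIntegrable (fun t => t * D t ^ 2) volume a b :=
    fun a b => (continuous_id.mul (hD.pow 2)).intervalIntegrable a b
  have hI0 : 0 ≤ I :=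
    intervalIntegral.integral_nonneg zero_le_one (fun t ht => by nlinarith [sq_nonneg (D t), ht.1])
  have hv1 : v 1 = 0 := by
    apply image_eq_zero_of_notMem_tsupport
    intro h
    exact absurd (hsupp h).2 (lt_irrefl 1)
  -- pointwise bound on (0,1]
  have hpt : ∀ x : ℝ, 0 < x → x ≤ 1 → v x ^ 2 ≤ Real.log (1 / x) * I := by
    intro x hx0 hx1
    have hA : 0 ≤ Real.log (1 / x) := Real.log_nonneg (by rw [le_div_iff₀ hx0]; linarith)
    -- FTC
    have hftc : ∫ t in x..1, D t = v 1 - v x :=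
      intervalIntegral.integral_deriv_eq_sub (fun t _ => hvd t) (hD.intervalIntegrable x 1)
    have habs : |v x| ≤ ∫ t in x..1, |D t| := by
      have h1 : |v x| = |∫ t in x..1, D t| := by rw [hftc, hv1]; rw [zero_sub, abs_neg]
      rw [h1]
      exact intervalIntegral.abs_integral_le_integral_abs hx1
    have key : ∀ L : ℝ, 0 < L → |v x| ≤ 1 / (2 * L) * Real.log (1 / x) + L / 2 * I := by
      intro L hL
      have huIcc : uIcc x 1 = Icc x 1 := uIcc_of_le hx1
      have hcont2 : ContinuousOn (fun t => 1 / (2 * L) * (1 / t) + L / 2 * (t * D t ^ 2))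
          (uIcc x 1) := by
        rw [huIcc]
        apply ContinuousOn.add
        · apply ContinuousOn.mul continuousOn_const
          apply ContinuousOn.div continuousOn_const continuousOn_id
          intro t ht
          exact ne_of_gt (lt_of_lt_of_le hx0 ht.1)
        · exact (continuous_const.mul (continuous_id.mul (hD.pow 2))).continuousOn
      have hint1 : IntervalIntegrable (fun t => |D t|) volume x 1 :=
        hD.abs.intervalIntegrable x 1
      have hint2 : IntervalIntegrable
          (fun t => 1 / (2 * L) * (1 / t) + L / 2 * (t * D t ^ 2)) volume x 1 :=
        hcont2.intervalIntegrable
      have hint2a : IntervalIntegrable (fun t => 1 / (2 * L) * (1 / t)) volume x 1 := by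
        apply ContinuousOn.intervalIntegrable
        rw [huIcc]
        apply ContinuousOn.mul continuousOn_const
        apply ContinuousOn.div continuousOn_const continuousOn_id
        intro t ht
        exact ne_of_gt (lt_of_lt_of_le hx0 ht.1)
      have hint2b : IntervalIntegrable (fun t => L / 2 * (t * D t ^ 2)) volume x 1 :=
        (continuous_const.mul (continuous_id.mul (hD.pow 2))).intervalIntegrable x 1
      have step : (∫ t in x..1, |D t|) ≤
          ∫ t in x..1, (1 / (2 * L) * (1 / t) + L / 2 * (t * D t ^ 2)) := by
        apply intervalIntegral.integral_mono_on hx1 hint1 hint2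
        intro t ht
        have ht0 : 0 < t := lt_of_lt_of_le hx0 ht.1
        have e : 1 / (2 * L) * (1 / t) + L / 2 * (t * D t ^ 2)
            = (1 + L ^ 2 * t ^ 2 * D t ^ 2) / (2 * L * t) := by
          field_simp
        rw [e, le_div_iff₀ (by positivity), ← sq_abs (D t)]
        nlinarith [sq_nonneg (L * t * |D t| - 1)]
      have split : (∫ t in x..1, (1 / (2 * L) * (1 / t) + L / 2 * (t * D t ^ 2)))
          = (∫ t in x..1, 1 / (2 * L) * (1 / t)) + ∫ t in x..1, L / 2 * (t * D t ^ 2) :=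
        intervalIntegral.integral_add hint2a hint2b
      have part1 : (∫ t in x..1, 1 / (2 * L) * (1 / t)) = 1 / (2 * L) * Real.log (1 / x) := by
        rw [intervalIntegral.integral_const_mul, integral_one_div]
        rw [uIcc_of_le hx1]
        intro h
        exact absurd h.1 (not_le.2 hx0)
      have part2 : (∫ t in x..1, L / 2 * (t * D t ^ 2)) ≤ L / 2 * I := by
        rw [intervalIntegral.integral_const_mul]
        apply mul_le_mul_of_nonneg_left _ (by positivity : (0:ℝ) ≤ L / 2)
        apply intervalIntegral.integral_mono_interval hx0.le hx1 le_rfl ?_ (hIint 0 1)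
        exact (ae_restrict_iff' measurableSet_Ioc).mpr
          (Filter.Eventually.of_forall fun t ht => mul_nonneg ht.1.le (sq_nonneg _))
      calc |v x| ≤ ∫ t in x..1, |D t| := habs
        _ ≤ _ := step
        _ = _ := split
        _ ≤ 1 / (2 * L) * Real.log (1 / x) + L / 2 * I := by rw [part1]; linarith
    have := aux_amgm_opt hA hI0 (abs_nonneg (v x)) key
    rwa [sq_abs] at this
  -- main pointwise bound on [0,1]
  have main : ∀ x ∈ Icc (0:ℝ) 1, Real.sinh x * v x ^ 2 ≤ Real.cosh 1 * I := by
    intro x hx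
    rcases hx.1.eq_or_lt with rfl | hx0
    · simp only [Real.sinh_zero, zero_mul]
      positivity
    · have hsq := hpt x hx0 hx.2
      have hlog : Real.log (1 / x) ≤ 1 / x - 1 := Real.log_le_sub_one_of_pos (by positivity)
      have hsinh : Real.sinh x ≤ Real.cosh 1 * x := aux_sinh_le hx0.le hx.2
      have hxlog : x * Real.log (1 / x) ≤ 1 := by
        have e : x * (1 / x - 1) = 1 - x := by field_simp
        nlinarith
      have h1 : Real.sinh x * v x ^ 2 ≤ Real.cosh 1 * x * v x ^ 2 :=
        mul_le_mul_of_nonneg_right hsinh (sq_nonneg _)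
      have h2 : Real.cosh 1 * x * v x ^ 2 ≤ Real.cosh 1 * x * (Real.log (1 / x) * I) :=
        mul_le_mul_of_nonneg_left hsq (by positivity)
      have h3 : Real.cosh 1 * x * (Real.log (1 / x) * I) ≤ Real.cosh 1 * I := by
        nlinarith [Real.cosh_pos 1, mul_nonneg (Real.cosh_pos 1).le hI0]
      linarith
  -- integrate the main bound
  have hSint : IntervalIntegrable (fun x => Real.sinh x * v x ^ 2) volume 0 1 :=
    (Real.continuous_sinh.mul ((hv.continuous).pow 2)).intervalIntegrable 0 1
  have step1 : (∫ x in (0:ℝ)..1, Real.sinh x * v x ^ 2) ≤ Real.cosh 1 * I := by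
    calc (∫ x in (0:ℝ)..1, Real.sinh x * v x ^ 2)
        ≤ ∫ _x in (0:ℝ)..1, Real.cosh 1 * I :=
          intervalIntegral.integral_mono_on zero_le_one hSint intervalIntegrable_const main
      _ = Real.cosh 1 * I := by simp
  have step2 : I ≤ ∫ t in (0:ℝ)..1, Real.sinh t * D t ^ 2 := by
    apply intervalIntegral.integral_mono_on zero_le_one (hIint 0 1)
      ((Real.continuous_sinh.mul (hD.pow 2)).intervalIntegrable 0 1)
    intro t ht
    exact mul_le_mul_of_nonneg_right (Real.self_le_sinh_iff.2 ht.1) (sq_nonneg _)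
  -- rewrite w and conclude
  have he : (1:ℝ) < Real.exp 1 := by
    have := Real.exp_one_gt_d9; linarith
  have hc : 0 < 2 * Real.exp 1 / (Real.exp 1 - 1) ^ 2 :=
    div_pos (by positivity) (pow_pos (by linarith) 2)
  simp only [w, mul_assoc]
  rw [intervalIntegral.integral_const_mul, intervalIntegral.integral_const_mul]
  rw [show Real.cosh 1 * (2 * Real.exp 1 / (Real.exp 1 - 1) ^ 2 *
      ∫ x in (0:ℝ)..1, Real.sinh x * D x ^ 2)
      = 2 * Real.exp 1 / (Real.exp 1 - 1) ^ 2 *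
      (Real.cosh 1 * ∫ x in (0:ℝ)..1, Real.sinh x * D x ^ 2) by ring]
  apply mul_le_mul_of_nonneg_left _ hc.le
  calc (∫ x in (0:ℝ)..1, Real.sinh x * v x ^ 2) ≤ Real.cosh 1 * I := step1
    _ ≤ Real.cosh 1 * ∫ x in (0:ℝ)..1, Real.sinh x * D x ^ 2 :=
        mul_le_mul_of_nonneg_left step2 (Real.cosh_pos 1).le
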